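/- arXiv:0705.2125 — 4 statements merged into one kernel-verified Lean document; each statement's English description precedes it below -/
import Mathlib

section
/- Let G = (V,E) be a finite graph with a nonnegative edge-weight function w, and let W be a finite nonempty set of nonnegative reals. If w_r assigns to each edge an independent uniformly random element of W, then with probability at least 1 − |V|⁵/(2|W|), the graph G is strongly min-unique with respect to w + w_r, i.e., for every k ∈ ℕ and every pair of vertices u,v, there is at most one minimum-weight path among u-v paths using at most k edges. -/
open SimpleGraph

/-- The weight of a walk: the sum of the weights of its edges. -/
noncomputable def walkWeight {V : Type*} {G : SimpleGraph V} (w : Sym2 V → ℝ)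
    {u v : V} (p : G.Walk u v) : ℝ :=
  (p.edges.map w).sum

/-- `p` belongs to `SP^{(k)}_{u,v}`: it is a `u`-`v` path with at most `k` edges whose
weight is minimal among all `u`-`v` paths with at most `k` edges. -/
def IsMinK {V : Type*} (G : SimpleGraph V) (w : Sym2 V → ℝ) (k : ℕ)
    {u v : V} (p : G.Walk u v) : Prop :=
  p.IsPath ∧ p.length ≤ k ∧
    ∀ q : G.Walk u v, q.IsPath → q.length ≤ k → walkWeight w p ≤ walkWeight w q

/-- `G` is strongly min-unique with respect to `w`: `|SP^{(k)}_{u,v}| ≤ 1` for all `k, u, v`. -/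
def StronglyMinUnique {V : Type*} (G : SimpleGraph V) (w : Sym2 V → ℝ) : Prop :=
  ∀ (k : ℕ) (u v : V) (p q : G.Walk u v), IsMinK G w k p → IsMinK G w k q → p = q

/-!
Isolation lemma (Mulmuley–Vazirani–Vazirani). If `SP^{(k)}_{u,v}` has two elements, some edge
`e` lies on one of them and not on the other; call `(k, u, v)` ambiguous at `e`. Once the
perturbations of all edges other than `e` are fixed, at most one value of the perturbation of
`e` makes `(k, u, v)` ambiguous at `e`: changing it shifts the weight of every path through `e`
by the same amount and leaves the other paths alone, while ambiguity forces the minimum over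
paths through `e` to equal the minimum over paths avoiding `e`. Hence each event has
probability at most `1/|W|`, and a union bound over the at most `|V|^3 · |V|^2/2` choices of
`(k, u, v, e)` (only `k < |V|` matters) gives the claim.
-/

open Finset

theorem Finset.card_mul_card_le_card_fun_of_injOn_restrict {α β : Type*} [Fintype α]
    [DecidableEq α] [Fintype β] (s : Finset (α → β)) (a : α)
    (hs : Set.InjOn (fun (f : α → β) (x : {x // x ≠ a}) => f x) (s : Set (α → β))) :
    #s * Fintype.card β ≤ Fintype.card (α → β) := by
  have hsplit :
      Fintype.card (α → β) = Fintype.card β * Fintype.card ({x // x ≠ a} → β) := by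
    rw [Fintype.card_congr (Equiv.funSplitAt a β), Fintype.card_prod]
  rw [hsplit, mul_comm]
  gcongr
  rw [← card_univ]
  exact card_le_card_of_injOn _ (fun _ _ => mem_coe.2 (mem_univ _)) hs

namespace SimpleGraph.Walk

variable {V : Type*} {G : SimpleGraph V}

theorem IsPath.eq_of_edges_subset {u v : V} {p q : G.Walk u v} (hp : p.IsPath)
    (hq : q.IsPath) (h : p.edges ⊆ q.edges) : p = q := by
  induction p with
  | nil =>
    cases q with
    | nil => rfl
    | cons _ q' => exact absurd q'.end_mem_support ((cons_isPath_iff _ _).1 hq).2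
  | @cons a b c hab p' ih =>
    rw [cons_isPath_iff] at hp
    cases q with
    | nil => exact absurd p'.end_mem_support hp.2
    | @cons _ d _ had q' =>
      rw [cons_isPath_iff] at hq
      have hab_mem : s(a, b) ∈ s(a, d) :: q'.edges := h (by simp)
      obtain rfl : b = d := by
        rcases List.mem_cons.1 hab_mem with heq | hmem
        · rcases Sym2.eq_iff.1 heq with ⟨_, rfl⟩ | ⟨rfl, rfl⟩
          · rfl
          · exact absurd hab G.irrefl
        · exact absurd (fst_mem_support_of_mem_edges q' hmem) hq.2
      rw [ih hp.1 hq.1 fun e he => ?_]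
      rcases List.mem_cons.1 (h (List.mem_cons_of_mem _ he)) with rfl | hmem
      · exact absurd (fst_mem_support_of_mem_edges p' he) hp.2
      · exact hmem

end SimpleGraph.Walk

section Weights

variable {V : Type*} {G : SimpleGraph V} {w₁ w₂ : Sym2 V → ℝ} {e : Sym2 V} {u v : V}

theorem walkWeight_eq_of_notMem_edges (h : ∀ e' ≠ e, w₁ e' = w₂ e') {p : G.Walk u v}
    (he : e ∉ p.edges) : walkWeight w₁ p = walkWeight w₂ p := by
  unfold walkWeight
  rw [List.map_congr_left fun e' he' => h e' (ne_of_mem_of_not_mem he' he)]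

theorem walkWeight_eq_add_of_mem_edges (h : ∀ e' ≠ e, w₁ e' = w₂ e') {p : G.Walk u v}
    (hp : p.edges.Nodup) (he : e ∈ p.edges) :
    walkWeight w₁ p = walkWeight w₂ p + (w₁ e - w₂ e) := by
  classical
  have hdiff : walkWeight w₁ p - walkWeight w₂ p = w₁ e - w₂ e := by
    unfold walkWeight
    rw [← List.sum_toFinset _ hp, ← List.sum_toFinset _ hp, ← sum_sub_distrib]
    exact sum_eq_single_of_mem e (List.mem_toFinset.2 he)
      fun e' _ hne => sub_eq_zero.2 (h e' hne)
  linarith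

theorem IsMinK.walkWeight_eq {w : Sym2 V → ℝ} {k : ℕ} {p q : G.Walk u v}
    (hp : IsMinK G w k p) (hq : IsMinK G w k q) : walkWeight w p = walkWeight w q :=
  le_antisymm (hp.2.2 q hq.1 hq.2.1) (hq.2.2 p hp.1 hp.2.1)

theorem IsMinK.min_card_sub_one [Fintype V] {w : Sym2 V → ℝ} {k : ℕ} {p : G.Walk u v}
    (hp : IsMinK G w k p) : IsMinK G w (min k (Fintype.card V - 1)) p := by
  have := hp.1.length_lt
  exact ⟨hp.1, le_min hp.2.1 (by omega),
    fun q hq hqk => hp.2.2 q hq (hqk.trans (min_le_left _ _))⟩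

def IsAmbiguousAt (G : SimpleGraph V) (w : Sym2 V → ℝ) (k : ℕ) (u v : V) (e : Sym2 V) :
    Prop :=
  ∃ p q : G.Walk u v, IsMinK G w k p ∧ IsMinK G w k q ∧ e ∈ p.edges ∧ e ∉ q.edges

theorem exists_isAmbiguousAt_of_not_stronglyMinUnique [Fintype V] {w : Sym2 V → ℝ}
    (h : ¬ StronglyMinUnique G w) :
    ∃ k < Fintype.card V, ∃ u v : V, ∃ e ∈ G.edgeSet, IsAmbiguousAt G w k u v e := by
  simp only [StronglyMinUnique, not_forall] at h
  obtain ⟨k, u, v, p, q, hp, hq, hne⟩ := h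
  obtain ⟨e, hep, heq⟩ : ∃ e ∈ p.edges, e ∉ q.edges := by
    by_contra! hsub
    exact hne (hp.1.eq_of_edges_subset hq.1 hsub)
  have : 0 < Fintype.card V := Fintype.card_pos_iff.2 ⟨u⟩
  exact ⟨_, by omega, u, v, e, p.edges_subset_edgeSet hep, p, q,
    hp.min_card_sub_one, hq.min_card_sub_one, hep, heq⟩

theorem IsAmbiguousAt.le_of_forall_ne_eq {k : ℕ} (h₁ : IsAmbiguousAt G w₁ k u v e)
    (h₂ : IsAmbiguousAt G w₂ k u v e) (h : ∀ e' ≠ e, w₁ e' = w₂ e') :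
    w₂ e ≤ w₁ e := by
  obtain ⟨p, q, hp, hq, hep, heq⟩ := h₁
  obtain ⟨p', q', hp', hq', hep', heq'⟩ := h₂
  have hq_eq := walkWeight_eq_of_notMem_edges h heq
  have hp'_eq := walkWeight_eq_add_of_mem_edges h hp'.1.isTrail.edges_nodup hep'
  have := hp.walkWeight_eq hq
  have := hp'.walkWeight_eq hq'
  have := hq'.2.2 q hq.1 hq.2.1
  have := hp.2.2 p' hp'.1 hp'.2.1
  linarith

theorem IsAmbiguousAt.eq_of_forall_ne_eq {k : ℕ} (h₁ : IsAmbiguousAt G w₁ k u v e)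
    (h₂ : IsAmbiguousAt G w₂ k u v e) (h : ∀ e' ≠ e, w₁ e' = w₂ e') : w₁ e = w₂ e :=
  le_antisymm (h₂.le_of_forall_ne_eq h₁ fun e' he' => (h e' he').symm)
    (h₁.le_of_forall_ne_eq h₂ h)

end Weights

section Perturbation

variable {V : Type*} {G : SimpleGraph V} [DecidableRel G.Adj] {W : Finset ℝ}

noncomputable def perturbWeight (w : Sym2 V → ℝ) (f : G.edgeSet → W) : Sym2 V → ℝ :=
  fun e => w e + if h : e ∈ G.edgeSet then (f ⟨e, h⟩ : ℝ) else 0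

theorem eq_of_isAmbiguousAt_perturbWeight {w : Sym2 V → ℝ} {k : ℕ} {u v : V}
    {e : G.edgeSet} {f g : G.edgeSet → W}
    (hf : IsAmbiguousAt G (perturbWeight w f) k u v e)
    (hg : IsAmbiguousAt G (perturbWeight w g) k u v e) (hfg : ∀ x ≠ e, f x = g x) :
    f = g := by
  have hoff : ∀ e' ≠ (e : Sym2 V), perturbWeight w f e' = perturbWeight w g e' := by
    intro e' he'
    simp only [perturbWeight]
    split_ifs with h
    · rw [hfg ⟨e', h⟩ fun hc => he' (congrArg Subtype.val hc)]
    · rfl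
  have he := hf.eq_of_forall_ne_eq hg hoff
  simp only [perturbWeight, e.2, dite_true, add_right_inj] at he
  funext x
  by_cases hx : x = e
  · exact hx ▸ Subtype.ext he
  · exact hfg x hx

variable [Fintype V] [DecidableEq V] (W)

open Classical in
theorem card_isAmbiguousAt_perturbWeight_mul_card_le (w : Sym2 V → ℝ) (k : ℕ) (u v : V)
    {e : Sym2 V} (he : e ∈ G.edgeSet) :
    #{f : G.edgeSet → W | IsAmbiguousAt G (perturbWeight w f) k u v e} * #W ≤
      Fintype.card (G.edgeSet → W) := by
  rw [← Fintype.card_coe W]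
  refine card_mul_card_le_card_fun_of_injOn_restrict _ ⟨e, he⟩ fun f hf g hg hfg => ?_
  simp only [coe_filter, mem_univ, true_and] at hf hg
  exact eq_of_isAmbiguousAt_perturbWeight (e := ⟨e, he⟩) hf hg
    fun x hx => congrFun hfg ⟨x, hx⟩

open Classical in
theorem card_not_stronglyMinUnique_perturbWeight_mul_card_le (w : Sym2 V → ℝ) :
    #{f : G.edgeSet → W | ¬ StronglyMinUnique G (perturbWeight w f)} * #W ≤
      Fintype.card V ^ 3 * #G.edgeFinset * Fintype.card (G.edgeSet → W) := by
  set T := range (Fintype.card V) ×ˢ (univ : Finset V) ×ˢ (univ : Finset V) ×ˢ G.edgeFinset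
  set A : ℕ × V × V × Sym2 V → Finset (G.edgeSet → W) :=
    fun t => {f | IsAmbiguousAt G (perturbWeight w f) t.1 t.2.1 t.2.2.1 t.2.2.2}
  have hsub : ({f | ¬ StronglyMinUnique G (perturbWeight w f)} : Finset (G.edgeSet → W)) ⊆
      T.biUnion A := by
    intro f hf
    obtain ⟨k, hk, u, v, e, he, hamb⟩ :=
      exists_isAmbiguousAt_of_not_stronglyMinUnique (mem_filter.1 hf).2
    exact mem_biUnion.2 ⟨(k, u, v, e), by simp [T, hk, he], by simpa [A] using hamb⟩
  calc _ ≤ (∑ t ∈ T, #(A t)) * #W := by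
        gcongr
        exact (card_le_card hsub).trans card_biUnion_le
    _ = ∑ t ∈ T, #(A t) * #W := sum_mul ..
    _ ≤ ∑ _t ∈ T, Fintype.card (G.edgeSet → W) := sum_le_sum fun t ht =>
        card_isAmbiguousAt_perturbWeight_mul_card_le W w _ _ _
          (mem_edgeFinset.1 (by simp only [T, mem_product] at ht; exact ht.2.2.2))
    _ = _ := by simp only [sum_const, smul_eq_mul, T, card_product, card_range, card_univ]; ring

end Perturbation

open Classical in
theorem stmt2_general {V : Type*} [Fintype V] [DecidableEq V] (G : SimpleGraph V)
    [DecidableRel G.Adj] (w : Sym2 V → ℝ)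
    (W : Finset ℝ) (hW : W.Nonempty) :
    (1 - (Fintype.card V : ℝ) ^ 5 / (2 * W.card)) * Fintype.card (G.edgeSet → W) ≤
      ((Finset.univ.filter fun f : G.edgeSet → W =>
        StronglyMinUnique G fun e =>
          w e + if h : e ∈ G.edgeSet then (f ⟨e, h⟩ : ℝ) else 0).card : ℝ) := by
  change _ ≤ (#{f : G.edgeSet → W | StronglyMinUnique G (perturbWeight w f)} : ℝ)
  set n := Fintype.card V
  set N := Fintype.card (G.edgeSet → W)
  set good : Finset (G.edgeSet → W) := {f | StronglyMinUnique G (perturbWeight w f)}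
  set bad : Finset (G.edgeSet → W) := {f | ¬ StronglyMinUnique G (perturbWeight w f)}
  have hsplit : (#good + #bad : ℝ) = N := by
    exact_mod_cast card_filter_add_card_filter_not _
  have hbad : (#bad * #W : ℝ) ≤ n ^ 3 * #G.edgeFinset * N := by
    exact_mod_cast card_not_stronglyMinUnique_perturbWeight_mul_card_le W w
  have hE : (#G.edgeFinset : ℝ) ≤ n ^ 2 / 2 :=
    (Nat.cast_le.2 G.card_edgeFinset_le_card_choose_two).trans
      (by simpa using Nat.choose_le_pow_div (α := ℝ) 2 n)
  have hW_pos : (0 : ℝ) < #W := by exact_mod_cast hW.card_pos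
  have hbad_le : (#bad : ℝ) ≤ n ^ 5 / (2 * #W) * N := by
    rw [div_mul_eq_mul_div, le_div_iff₀ (by positivity)]
    nlinarith [(by positivity : (0 : ℝ) ≤ n ^ 3 * N)]
  linarith

open Classical in
/-- isolation lemma: if each edge of `G` independently receives a uniformly
random additional weight from a finite nonempty set `W` of nonnegative reals, then with
probability at least `1 − |V|⁵/(2|W|)` the graph `G` is strongly min-unique with respect
to the perturbed weights.  Probability is expressed by counting assignments
`f : E(G) → W`. -/
theorem stmt2 {V : Type*} [Fintype V] [DecidableEq V] (G : SimpleGraph V)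
    [DecidableRel G.Adj] (w : Sym2 V → ℝ) (hw : ∀ e, 0 ≤ w e)
    (W : Finset ℝ) (hW : W.Nonempty) (hWpos : ∀ x ∈ W, 0 ≤ x) :
    (1 - (Fintype.card V : ℝ) ^ 5 / (2 * W.card)) * Fintype.card (G.edgeSet → W) ≤
      ((Finset.univ.filter fun f : G.edgeSet → W =>
        StronglyMinUnique G fun e =>
          w e + if h : e ∈ G.edgeSet then (f ⟨e, h⟩ : ℝ) else 0).card : ℝ) :=
  stmt2_general G w W hW
end

section
/- Fix a weight function on edges of G and fix an edge e, a parameter k ∈ ℕ, and vertices s,t. Say that (k,s,t) blames e under an assignment of a random weight x ∈ ℝ≥0 to e (keeping all other edge weights fixed) if among the minimum-weight s-t paths with at most k edges, at least one contains e and at least one does not. Then there is at most one value x for which (k,s,t) blames e. -/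
/-!
The minimum weight of an `s`-`t` path avoiding `e` does not depend on the weight `x` of `e`,
while the weight of every path through `e` grows with slope exactly one in `x`. So if an
`e`-avoiding path is optimal at `x` and a path through `e` is optimal at `y`, then `y ≤ x`;
a blaming value has both kinds of optimal paths, so any two blaming values coincide.
-/

open SimpleGraph

section

open Function

variable {V : Type*} {G : SimpleGraph V} {u v : V}

lemma walkWeight_update_of_notMem [DecidableEq V] (w : Sym2 V → ℝ) {e : Sym2 V} (x : ℝ)
    {p : G.Walk u v} (hp : e ∉ p.edges) :
    walkWeight (update w e x) p = walkWeight w p := by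
  unfold walkWeight
  congr 1
  exact List.map_congr_left fun f hf => update_of_ne (ne_of_mem_of_not_mem hf hp) x w

lemma walkWeight_update_of_mem [DecidableEq V] (w : Sym2 V → ℝ) {e : Sym2 V} (x : ℝ)
    {p : G.Walk u v} (hp : p.edges.Nodup) (he : e ∈ p.edges) :
    walkWeight (update w e x) p = walkWeight w p - w e + x := by
  have hrest : ((p.edges.erase e).map (update w e x)).sum = ((p.edges.erase e).map w).sum := by
    congr 1
    exact List.map_congr_left fun f hf => update_of_ne ((hp.mem_erase_iff.mp hf).1) x w
  have hsplit (w' : Sym2 V → ℝ) : walkWeight w' p = w' e + ((p.edges.erase e).map w').sum := by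
    rw [walkWeight, ((List.perm_cons_erase he).map w').sum_eq, List.map_cons, List.sum_cons]
  rw [hsplit, hsplit w, hrest, update_self]
  ring

lemma le_of_isMinK_avoiding_of_isMinK_through [DecidableEq V] {w : Sym2 V → ℝ} {e : Sym2 V}
    {k : ℕ} {x y : ℝ} {q p : G.Walk u v}
    (hq : IsMinK G (update w e x) k q) (hqe : e ∉ q.edges)
    (hp : IsMinK G (update w e y) k p) (hpe : e ∈ p.edges) : y ≤ x := by
  have hx : walkWeight (update w e x) q ≤ walkWeight (update w e x) p := hq.2.2 p hp.1 hp.2.1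
  have hy : walkWeight (update w e y) p ≤ walkWeight (update w e y) q := hp.2.2 q hq.1 hq.2.1
  rw [walkWeight_update_of_notMem w x hqe, walkWeight_update_of_mem w x hp.1.edges_nodup hpe]
    at hx
  rw [walkWeight_update_of_notMem w y hqe, walkWeight_update_of_mem w y hp.1.edges_nodup hpe]
    at hy
  linarith

end

theorem stmt4_general {V : Type*} [DecidableEq V] (G : SimpleGraph V)
    (w₀ : Sym2 V → ℝ) (e : Sym2 V)
    (k : ℕ) (s t : V) :
    Set.Subsingleton {x : ℝ | 0 ≤ x ∧
      (∃ p : G.Walk s t,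
        IsMinK G (fun f => if f = e then x else w₀ f) k p ∧ e ∈ p.edges) ∧
      (∃ q : G.Walk s t,
        IsMinK G (fun f => if f = e then x else w₀ f) k q ∧ e ∉ q.edges)} := by
  have hupdate (x : ℝ) : (fun f => if f = e then x else w₀ f) = Function.update w₀ e x :=
    funext fun f => (Function.update_apply w₀ e x f).symm
  rintro x ⟨-, ⟨p, hp, hpe⟩, ⟨q, hq, hqe⟩⟩ y ⟨-, ⟨p', hp', hpe'⟩, ⟨q', hq', hqe'⟩⟩
  rw [hupdate] at hp hq hp' hq'
  exact le_antisymm (le_of_isMinK_avoiding_of_isMinK_through hq' hqe' hp hpe)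
    (le_of_isMinK_avoiding_of_isMinK_through hq hqe hp' hpe')

/-- fixing all edge weights except that of a chosen edge `e`, which receives
weight `x ≥ 0`, there is at most one value of `x` for which `(k, s, t)` blames `e`, i.e.
for which among the minimum-weight `s`-`t` paths with at most `k` edges at least one
contains `e` and at least one does not. -/
theorem stmt4 {V : Type*} [Fintype V] [DecidableEq V] (G : SimpleGraph V)
    (w₀ : Sym2 V → ℝ) (hw₀ : ∀ f, 0 ≤ w₀ f) (e : Sym2 V) (he : e ∈ G.edgeSet)
    (k : ℕ) (s t : V) :
    Set.Subsingleton {x : ℝ | 0 ≤ x ∧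
      (∃ p : G.Walk s t,
        IsMinK G (fun f => if f = e then x else w₀ f) k p ∧ e ∈ p.edges) ∧
      (∃ q : G.Walk s t,
        IsMinK G (fun f => if f = e then x else w₀ f) k q ∧ e ∉ q.edges)} :=
  stmt4_general G w₀ e k s t
end

section
/- Let α > 0 and let G = (V,E) be a graph with nonnegative edge-weight function w such that every nonzero edge weight is at least 1. Let T₁, T₂ be spanning trees of G, let w_r assign each edge a weight in [0, 1/|V|⁴], and let w′ = w + w_r. Then for all sufficiently large |V|, c_{w′}(T₁) ≤ α · c_{w′}(T₂) implies c_w(T₁) ≤ α · (1 + 1/(2|V|)) · c_w(T₂). -/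
/-!
The perturbation `w_r` adds at most `|V|³ · |V|⁻⁴ = 1/|V|` to any routing cost, so the hypothesis
gives `c_w(T₁) ≤ α c_w(T₂) + α/|V|`. Since nonzero weights are at least `1` and distances are
symmetric, a routing cost under `w` is either `0` or at least `2`. In the second case
`α/|V| ≤ α/(2|V|) · c_w(T₂)`; in the first, `c_w(T₁) ≤ α/|V| < 1` once `|V| > α`, which forces
`c_w(T₁) = 0`.
-/

open SimpleGraph

/-- The distance between two vertices of a tree: the weight of the unique simple path. -/
noncomputable def treeDist {V : Type*} {T : SimpleGraph V} (hT : T.IsTree)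
    (w : Sym2 V → ℝ) (u v : V) : ℝ :=
  walkWeight w (hT.existsUnique_path u v).choose

section WalkWeight

variable {V : Type*} {G : SimpleGraph V} {u v : V}

lemma walkWeight_add (w w' : Sym2 V → ℝ) (p : G.Walk u v) :
    walkWeight (fun e => w e + w' e) p = walkWeight w p + walkWeight w' p :=
  List.sum_map_add

lemma walkWeight_reverse (w : Sym2 V → ℝ) (p : G.Walk u v) :
    walkWeight w p.reverse = walkWeight w p := by
  simp only [walkWeight, Walk.edges_reverse, List.map_reverse, List.sum_reverse]

lemma walkWeight_nonneg {w : Sym2 V → ℝ} (hw : ∀ e, 0 ≤ w e) (p : G.Walk u v) :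
    0 ≤ walkWeight w p :=
  List.sum_nonneg (by simpa using fun e _ => hw e)

lemma walkWeight_le_length_mul {w : Sym2 V → ℝ} {b : ℝ} (hw : ∀ e, w e ≤ b) (p : G.Walk u v) :
    walkWeight w p ≤ p.length * b := by
  have h := List.sum_le_card_nsmul (p.edges.map w) b (by simpa using fun e _ => hw e)
  rwa [nsmul_eq_mul, List.length_map, Walk.length_edges] at h

lemma walkWeight_eq_zero_or_one_le {w : Sym2 V → ℝ} (hw : ∀ e, w e = 0 ∨ 1 ≤ w e)
    (p : G.Walk u v) : walkWeight w p = 0 ∨ 1 ≤ walkWeight w p := by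
  by_cases hzero : ∀ e ∈ p.edges, w e = 0
  · exact .inl (List.sum_eq_zero (by simpa using hzero))
  · push Not at hzero
    obtain ⟨e, he, hne⟩ := hzero
    have hnonneg : ∀ x ∈ p.edges.map w, 0 ≤ x := by
      simpa using fun e _ => (hw e).elim (·.ge) (zero_le_one.trans ·)
    exact .inr (((hw e).resolve_left hne).trans
      (List.single_le_sum hnonneg _ (List.mem_map_of_mem he)))

end WalkWeight

section TreeDist

variable {V : Type*} {T : SimpleGraph V} (hT : T.IsTree) (w : Sym2 V → ℝ)

lemma treeDist_eq_walkWeight {u v : V} {p : T.Walk u v} (hp : p.IsPath) :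
    treeDist hT w u v = walkWeight w p := by
  have hpath := hT.existsUnique_path u v
  rw [treeDist, hpath.unique hpath.choose_spec.1 hp]

lemma treeDist_self (u : V) : treeDist hT w u u = 0 :=
  treeDist_eq_walkWeight hT w Walk.IsPath.nil

lemma treeDist_comm (u v : V) : treeDist hT w u v = treeDist hT w v u := by
  have hp := (hT.existsUnique_path v u).choose_spec.1
  rw [treeDist_eq_walkWeight hT w hp.reverse, walkWeight_reverse, treeDist]

lemma treeDist_le_card_mul [Fintype V] {b : ℝ} (hb : 0 ≤ b) (hw : ∀ e, w e ≤ b) (u v : V) :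
    treeDist hT w u v ≤ Fintype.card V * b := by
  have hp := (hT.existsUnique_path u v).choose_spec.1
  refine (walkWeight_le_length_mul hw _).trans (mul_le_mul_of_nonneg_right ?_ hb)
  exact_mod_cast hp.length_lt.le

end TreeDist

/-- The routing cost `c_w(T)`, summed over ordered pairs. -/
noncomputable def routingCost {V : Type*} [Fintype V] {T : SimpleGraph V} (hT : T.IsTree)
    (w : Sym2 V → ℝ) : ℝ :=
  ∑ u : V, ∑ v : V, treeDist hT w u v

section RoutingCost

variable {V : Type*} [Fintype V] {T : SimpleGraph V} (hT : T.IsTree)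

lemma routingCost_add (w w' : Sym2 V → ℝ) :
    routingCost hT (fun e => w e + w' e) = routingCost hT w + routingCost hT w' := by
  simp only [routingCost, treeDist, walkWeight_add, Finset.sum_add_distrib]

lemma routingCost_nonneg {w : Sym2 V → ℝ} (hw : ∀ e, 0 ≤ w e) : 0 ≤ routingCost hT w :=
  Finset.sum_nonneg fun _ _ => Finset.sum_nonneg fun _ _ => walkWeight_nonneg hw _

lemma routingCost_le_card_pow_three_mul {w : Sym2 V → ℝ} {b : ℝ} (hb : 0 ≤ b)
    (hw : ∀ e, w e ≤ b) : routingCost hT w ≤ Fintype.card V ^ 3 * b := by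
  calc routingCost hT w ≤ ∑ _u : V, ∑ _v : V, Fintype.card V * b :=
        Finset.sum_le_sum fun u _ => Finset.sum_le_sum fun v _ =>
          treeDist_le_card_mul hT w hb hw u v
    _ = Fintype.card V ^ 3 * b := by
        simp only [Finset.sum_const, Finset.card_univ, nsmul_eq_mul]
        ring

lemma routingCost_eq_zero_or_two_le {w : Sym2 V → ℝ} (hw : ∀ e, w e = 0 ∨ 1 ≤ w e) :
    routingCost hT w = 0 ∨ 2 ≤ routingCost hT w := by
  by_cases hzero : ∀ u v, treeDist hT w u v = 0
  · simp [routingCost, hzero]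
  push Not at hzero
  obtain ⟨u, v, huv⟩ := hzero
  have hone : 1 ≤ treeDist hT w u v := (walkWeight_eq_zero_or_one_le hw _).resolve_left huv
  have hne : (u, v) ≠ (v, u) := by
    rintro ⟨⟩
    exact huv (treeDist_self hT w u)
  have hnonneg : ∀ e, 0 ≤ w e := fun e => (hw e).elim (·.ge) (zero_le_one.trans ·)
  have hpair := Finset.add_le_sum (f := fun p : V × V => treeDist hT w p.1 p.2)
    (fun p _ => walkWeight_nonneg hnonneg _) (Finset.mem_univ _) (Finset.mem_univ _) hne
  rw [Fintype.sum_prod_type', treeDist_comm hT w v u] at hpair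
  exact .inr (by unfold routingCost; linarith)

end RoutingCost

lemma le_mul_one_add_of_perturbed_le {α n c₁ c₂ r₁ r₂ : ℝ} (hα : 0 < α) (hαn : α < n)
    (hc₁ : c₁ = 0 ∨ 1 ≤ c₁) (hc₂ : c₂ = 0 ∨ 2 ≤ c₂) (hr₁ : 0 ≤ r₁) (hr₂ : r₂ ≤ 1 / n)
    (h : c₁ + r₁ ≤ α * (c₂ + r₂)) : c₁ ≤ α * (1 + 1 / (2 * n)) * c₂ := by
  have hn : 0 < n := hα.trans hαn
  have hc₁_le : c₁ ≤ α * c₂ + α / n := by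
    have : α * r₂ ≤ α / n := (mul_le_mul_of_nonneg_left hr₂ hα.le).trans_eq (mul_one_div α n)
    nlinarith
  rcases hc₂ with rfl | hc₂
  · have : α / n < 1 := (div_lt_one hn).2 hαn
    rcases hc₁ with rfl | hc₁
    · simp
    · linarith
  · have : α / n ≤ α / (2 * n) * c₂ := by
      rw [div_mul_eq_mul_div, div_le_div_iff₀ hn (by positivity)]
      nlinarith [mul_le_mul_of_nonneg_left hc₂ (mul_pos hα hn).le]
    calc c₁ ≤ α * c₂ + α / (2 * n) * c₂ := by linarith
      _ = α * (1 + 1 / (2 * n)) * c₂ := by ring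

/-- for any `α > 0` and all sufficiently large `|V|`: if every nonzero edge
weight of `w` is at least `1`, the perturbation `w_r` takes values in `[0, 1/|V|⁴]`, and
`w′ = w + w_r`, then `c_{w′}(T₁) ≤ α c_{w′}(T₂)` implies
`c_w(T₁) ≤ α (1 + 1/(2|V|)) c_w(T₂)` for spanning trees `T₁, T₂` of `G`. -/
theorem stmt5 (α : ℝ) (hα : 0 < α) :
    ∃ N : ℕ, ∀ (V : Type) [Fintype V], ∀ (G T₁ T₂ : SimpleGraph V)
      (w wr : Sym2 V → ℝ), N ≤ Fintype.card V →
      (∀ e, w e = 0 ∨ 1 ≤ w e) →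
      (∀ e, 0 ≤ wr e ∧ wr e ≤ 1 / (Fintype.card V : ℝ) ^ 4) →
      T₁ ≤ G → T₂ ≤ G → ∀ (h₁ : T₁.IsTree) (h₂ : T₂.IsTree),
      (∑ u : V, ∑ v : V, treeDist h₁ (fun e => w e + wr e) u v) ≤
        α * ∑ u : V, ∑ v : V, treeDist h₂ (fun e => w e + wr e) u v →
      (∑ u : V, ∑ v : V, treeDist h₁ w u v) ≤
        α * (1 + 1 / (2 * (Fintype.card V : ℝ))) * ∑ u : V, ∑ v : V, treeDist h₂ w u v := by
  refine ⟨⌈α⌉₊ + 1, fun V _ G T₁ T₂ w wr hN hw hwr _ _ h₁ h₂ hcost => ?_⟩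
  set n : ℝ := (Fintype.card V : ℝ)
  have hαn : α < n := by
    have : ((⌈α⌉₊ + 1 : ℕ) : ℝ) ≤ n := Nat.cast_le.2 hN
    push_cast at this
    linarith [Nat.le_ceil α]
  have hn : n ≠ 0 := (hα.trans hαn).ne'
  have hr₂ : routingCost h₂ wr ≤ 1 / n := by
    have := routingCost_le_card_pow_three_mul h₂ (by positivity) fun e => (hwr e).2
    rwa [show n ^ 3 * (1 / n ^ 4) = 1 / n by field_simp] at this
  change routingCost h₁ _ ≤ α * routingCost h₂ _ at hcost
  rw [routingCost_add, routingCost_add] at hcost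
  have hc₁ := (routingCost_eq_zero_or_two_le h₁ hw).imp_right (one_le_two.trans ·)
  exact le_mul_one_add_of_perturbed_le hα hαn hc₁ (routingCost_eq_zero_or_two_le h₂ hw)
    (routingCost_nonneg h₁ fun e => (hwr e).1) hr₂ hcost
end

section
/- Let G be a strongly min-unique connected graph (with respect to positive edge weights). For vertices v₁, …, v_k, define R₁ to be the one-vertex subgraph {v₁}, and for 2 ≤ i ≤ k let R_i = R_{i−1} ∪ P_i, where P_i is the unique shortest path from v_i to the vertex of R_{i−1} closest to v_i. Then each R_i is a subtree of G. -/
/-!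
Because edge weights are positive and `P` is no heavier than any path from `v` into `R`, the
path `P` meets `R` only in its end `z`: an earlier vertex of `R` on `P` would cut off a strictly
lighter path into `R`. Read backwards from `z`, each further vertex of `P` is new, so `P` is
glued onto the tree `R` one pendant edge at a time, and a pendant edge joins two previously
unreachable vertices, which preserves acyclicity. Connectivity holds because `R` and `P` share `z`.
-/

open SimpleGraph

/-- `p` is a shortest `u`-`v` path: a path of minimum weight among all `u`-`v` paths. -/
def IsShortestPath {V : Type*} (G : SimpleGraph V) (w : Sym2 V → ℝ)
    {u v : V} (p : G.Walk u v) : Prop :=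
  p.IsPath ∧ ∀ q : G.Walk u v, q.IsPath → walkWeight w p ≤ walkWeight w q

namespace SimpleGraph

variable {V : Type*} {G H : SimpleGraph V}

lemma IsAcyclic.of_induce {s : Set V} (hs : H.support ⊆ s) (h : (H.induce s).IsAcyclic) :
    H.IsAcyclic := by
  intro x c hc
  have hcs : ∀ y ∈ c.support, y ∈ s := fun y hy =>
    hs (mem_support_of_mem_walk_support c hc.not_nil hy)
  refine h (c.induce s hcs) ?_
  rwa [← Walk.isCycle_map_iff_of_injective (f := (Embedding.induce s).toHom)
    (Embedding.induce (G := H) s).injective, Walk.map_induce]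

lemma Subgraph.isAcyclic_spanningCoe_iff {R : G.Subgraph} :
    R.spanningCoe.IsAcyclic ↔ R.coe.IsAcyclic :=
  ⟨fun h => h.embedding R.coeEmbeddingSpanningCoe,
    IsAcyclic.of_induce (H := R.spanningCoe) R.support_subset_verts⟩

lemma IsAcyclic.sup_edge_of_notMem_support {u v : V} (hH : H.IsAcyclic) (hu : u ∉ H.support) :
    (H ⊔ edge u v).IsAcyclic := by
  by_cases huv : u = v
  · simpa [huv] using hH
  · exact hH.sup_edge_of_not_reachable fun h => hu (mem_support_of_reachable huv h)

lemma IsAcyclic.sup_spanningCoe_toSubgraph (hH : H.IsAcyclic) {v z : V} (P : G.Walk v z)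
    (hP : P.IsPath) (hPH : ∀ y ∈ P.support, y ∈ H.support → y = z) :
    (H ⊔ P.toSubgraph.spanningCoe).IsAcyclic := by
  induction P with
  | @nil u =>
    have hbot : (G.singletonSubgraph u).spanningCoe = ⊥ := by ext; simp
    simpa [hbot] using hH
  | @cons a b z hab q ih =>
    rw [Walk.cons_isPath_iff] at hP
    have hq := ih hP.1 fun y hy => hPH y (List.mem_cons_of_mem _ hy)
    have ha : a ∉ (H ⊔ q.toSubgraph.spanningCoe).support := by
      rintro ⟨c, hac | hac⟩
      · exact hP.2 (hPH a q.support.mem_cons_self hac.left_mem_support ▸ q.end_mem_support)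
      · exact hP.2 (q.mem_verts_toSubgraph.mp hac.fst_mem)
    rw [Walk.toSubgraph, Subgraph.sup_spanningCoe, Subgraph.spanningCoe_subgraphOfAdj,
      sup_left_comm, sup_comm]
    exact hq.sup_edge_of_notMem_support ha

theorem Subgraph.isTree_sup_toSubgraph {R : G.Subgraph} (hR : R.coe.IsTree) {v z : V}
    (hz : z ∈ R.verts) (P : G.Walk v z) (hP : P.IsPath)
    (hPR : ∀ y ∈ P.support, y ∈ R.verts → y = z) : (R ⊔ P.toSubgraph).coe.IsTree := by
  have hRconn : R.Connected := Subgraph.connected_iff'.mpr hR.connected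
  have hconn : (R ⊔ P.toSubgraph).Connected :=
    Subgraph.connected_sup hRconn.preconnected P.toSubgraph_connected.preconnected
      ⟨z, hz, P.end_mem_verts_toSubgraph⟩
  have hacyc : (R.spanningCoe ⊔ P.toSubgraph.spanningCoe).IsAcyclic :=
    (isAcyclic_spanningCoe_iff.mpr hR.isAcyclic).sup_spanningCoe_toSubgraph P hP
      fun y hy hyR => hPR y hy (R.support_subset_verts hyR)
  exact ⟨hconn.coe, isAcyclic_spanningCoe_iff.mp hacyc⟩

end SimpleGraph

section walkWeight

variable {V : Type*} {G : SimpleGraph V} (w : Sym2 V → ℝ)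

lemma walkWeight_append {u v x : V} (p : G.Walk u v) (q : G.Walk v x) :
    walkWeight w (p.append q) = walkWeight w p + walkWeight w q := by
  simp only [walkWeight, Walk.edges_append, List.map_append, List.sum_append]

variable {w}

lemma walkWeight_pos (hw : ∀ e ∈ G.edgeSet, 0 < w e) {u v : V} (p : G.Walk u v)
    (hp : ¬p.Nil) : 0 < walkWeight w p := by
  refine List.sum_pos _ (fun x hx => ?_) (by simpa [Walk.edges_eq_nil] using hp)
  obtain ⟨e, he, rfl⟩ := List.mem_map.mp hx
  exact hw e (p.edges_subset_edgeSet he)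

lemma SimpleGraph.Walk.eq_end_of_mem_support_of_walkWeight_le (hw : ∀ e ∈ G.edgeSet, 0 < w e)
    {S : Set V} {v z : V} (P : G.Walk v z) (hP : P.IsPath)
    (hclosest : ∀ y ∈ S, ∀ q : G.Walk v y, q.IsPath → walkWeight w P ≤ walkWeight w q) :
    ∀ y ∈ P.support, y ∈ S → y = z := by
  classical
  intro y hy hyS
  by_contra hyz
  have hle := hclosest y hyS _ (hP.takeUntil hy)
  have hpos := walkWeight_pos hw (P.dropUntil y hy) (Walk.not_nil_of_ne hyz)
  have hsplit := walkWeight_append w (P.takeUntil y hy) (P.dropUntil y hy)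
  rw [P.take_spec hy] at hsplit
  linarith

end walkWeight

theorem stmt11_general {V : Type*} (G : SimpleGraph V)
    (w : Sym2 V → ℝ) (hw : ∀ e ∈ G.edgeSet, 0 < w e)
    (R : G.Subgraph) (hR : R.coe.IsTree) (v z : V) (hz : z ∈ R.verts)
    (P : G.Walk v z) (hP : P.IsPath)
    (hclosest : ∀ y ∈ R.verts, ∀ q : G.Walk v y, q.IsPath →
      walkWeight w P ≤ walkWeight w q) :
    (R ⊔ P.toSubgraph).coe.IsTree :=
  Subgraph.isTree_sup_toSubgraph hR hz P hP
    (P.eq_end_of_mem_support_of_walkWeight_le hw hP hclosest)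

/-- inductive step of the core construction: let `G` be a connected graph
with positive edge weights in which shortest paths are unique, let `R` be a subtree of
`G`, and let `P` be the (unique) shortest path from a vertex `v` to a closest vertex `z`
of `R` (i.e. the weight of `P` is at most the weight of any path from `v` to any vertex
of `R`).  Then `R ∪ P` is again a subtree of `G`. -/
theorem stmt11 {V : Type*} [Fintype V] (G : SimpleGraph V) (hG : G.Connected)
    (w : Sym2 V → ℝ) (hw : ∀ e ∈ G.edgeSet, 0 < w e)
    (hmu : ∀ (u u' : V) (p q : G.Walk u u'),
      IsShortestPath G w p → IsShortestPath G w q → p = q)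
    (R : G.Subgraph) (hR : R.coe.IsTree) (v z : V) (hz : z ∈ R.verts)
    (P : G.Walk v z) (hP : P.IsPath)
    (hclosest : ∀ y ∈ R.verts, ∀ q : G.Walk v y, q.IsPath →
      walkWeight w P ≤ walkWeight w q) :
    (R ⊔ P.toSubgraph).coe.IsTree :=
  stmt11_general G w hw R hR v z hz P hP hclosest
end
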